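/- Let T be a rooted tree with root r in which every internal vertex has at least two children, let n be its number of leaves, and let P be an r-path such that some component T_1 of T∖P has n_1 > n/2 leaves with root z (the vertex of T_1 closest to r). Let Q be the unique path in T from r to z. Then every component of T∖Q has strictly fewer than n_1 leaves. -/

import Mathlib

open scoped Classical

/-- A finite rooted tree given by a parent function: the root is its own parent,
and every vertex reaches the root by iterating `parent`. -/
structure ParentTree (V : Type*) where
  root : V
  parent : V → V
  parent_root : parent root = root
  reaches_root : ∀ v : V, ∃ n : ℕ, parent^[n] v = root

namespace ParentTree

variable {V : Type*} [Fintype V] [DecidableEq V]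

/-- The children of a vertex. -/
def children (T : ParentTree V) (v : V) : Finset V :=
  Finset.univ.filter fun u => u ≠ T.root ∧ T.parent u = v

/-- Leaves: vertices with no children. -/
def leaves (T : ParentTree V) : Finset V :=
  Finset.univ.filter fun v => T.children v = ∅

/-- `u` is an ancestor of `v` (possibly `u = v`). -/
def IsAncestor (T : ParentTree V) (u v : V) : Prop :=
  ∃ n : ℕ, T.parent^[n] v = u

/-- The leaves of `T` lying in the subtree rooted at `u`. -/
noncomputable def descLeaves (T : ParentTree V) (u : V) : Finset V :=
  T.leaves.filter fun v => T.IsAncestor u v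

/-- An `r`-path: a path in the tree starting at the root, i.e. a nonempty
descending list of vertices beginning with the root. -/
def IsRPath (T : ParentTree V) (P : List V) : Prop :=
  P ≠ [] ∧ P.head? = some T.root ∧ P.Chain' fun a b => b ∈ T.children a

end ParentTree

namespace ParentTree

variable {V : Type*} [Fintype V] [DecidableEq V] (T : ParentTree V)

lemma iterate_root (k : ℕ) : T.parent^[k] T.root = T.root := by
  induction k with
  | zero => rfl
  | succ n ih => rw [Function.iterate_succ_apply', ih, T.parent_root]

lemma eq_root_of_iterate_fixed {v : V} {k : ℕ} (hk : 1 ≤ k)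
    (h : T.parent^[k] v = v) : v = T.root := by
  obtain ⟨n, hn⟩ := T.reaches_root v
  have hmul : ∀ m, T.parent^[k * m] v = v := by
    intro m
    induction m with
    | zero => rfl
    | succ m ih => rw [Nat.mul_succ, Function.iterate_add_apply, h, ih]
  have h2 : n ≤ k * n := Nat.le_mul_of_pos_left n hk
  have h3 : T.parent^[k * n] v = T.parent^[k * n - n] (T.parent^[n] v) := by
    rw [← Function.iterate_add_apply, Nat.sub_add_cancel h2]
  rw [hn, iterate_root, hmul n] at h3
  exact h3

lemma ancestor_trans {u v w : V} (h1 : T.IsAncestor u v) (h2 : T.IsAncestor v w) :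
    T.IsAncestor u w := by
  obtain ⟨a, ha⟩ := h1; obtain ⟨b, hb⟩ := h2
  exact ⟨a + b, by rw [Function.iterate_add_apply, hb, ha]⟩

lemma ancestor_comparable {u z v : V} (h1 : T.IsAncestor u v) (h2 : T.IsAncestor z v) :
    T.IsAncestor u z ∨ T.IsAncestor z u := by
  obtain ⟨a, ha⟩ := h1; obtain ⟨b, hb⟩ := h2
  rcases le_total a b with h | h
  · right
    exact ⟨b - a, by rw [← ha, ← Function.iterate_add_apply, Nat.sub_add_cancel h, hb]⟩
  · left
    exact ⟨a - b, by rw [← hb, ← Function.iterate_add_apply, Nat.sub_add_cancel h, ha]⟩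

lemma mem_children {c v : V} : c ∈ T.children v ↔ c ≠ T.root ∧ T.parent c = v := by
  simp [children]

lemma ancestor_of_child {c v : V} (h : c ∈ T.children v) : T.IsAncestor v c :=
  ⟨1, ((T.mem_children).1 h).2⟩

lemma not_ancestor_child {c v : V} (h : c ∈ T.children v) : ¬ T.IsAncestor c v := by
  rintro ⟨k, hk⟩
  obtain ⟨hcr, hpc⟩ := (T.mem_children).1 h
  apply hcr
  apply T.eq_root_of_iterate_fixed (k := k + 1) (by omega)
  rw [Function.iterate_succ_apply, hpc, hk]

noncomputable def descSet (T : ParentTree V) (v : V) : Finset V :=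
  Finset.univ.filter fun w => T.IsAncestor v w

lemma descLeaves_nonempty (v : V) : (T.descLeaves v).Nonempty := by
  suffices h : ∀ N : ℕ, ∀ v : V, (T.descSet v).card ≤ N → (T.descLeaves v).Nonempty by
    exact h (T.descSet v).card v le_rfl
  intro N
  induction N with
  | zero =>
    intro v h
    exfalso
    have : v ∈ T.descSet v := by simp only [descSet, Finset.mem_filter, Finset.mem_univ, true_and]; exact ⟨0, rfl⟩
    have := Finset.card_pos.2 ⟨v, this⟩
    omega
  | succ N ih =>
    intro v h
    by_cases hc : T.children v = ∅
    · refine ⟨v, ?_⟩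
      simp only [descLeaves, leaves, Finset.mem_filter, Finset.mem_univ, true_and]
      exact ⟨hc, ⟨0, rfl⟩⟩
    · obtain ⟨c, hcmem⟩ := Finset.nonempty_iff_ne_empty.2 hc
      have hsub : T.descSet c ⊆ T.descSet v := by
        intro w hw
        simp only [descSet, Finset.mem_filter, Finset.mem_univ, true_and] at hw ⊢
        exact T.ancestor_trans (T.ancestor_of_child hcmem) hw
      have hvmem : v ∈ T.descSet v := by
        simp only [descSet, Finset.mem_filter, Finset.mem_univ, true_and]
        exact ⟨0, rfl⟩
      have hvnot : v ∉ T.descSet c := by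
        simp only [descSet, Finset.mem_filter, Finset.mem_univ, true_and]
        exact T.not_ancestor_child hcmem
      have hlt : (T.descSet c).card < (T.descSet v).card :=
        Finset.card_lt_card ⟨hsub, fun hs => hvnot (hs hvmem)⟩
      obtain ⟨ℓ, hl⟩ := ih c (by omega)
      refine ⟨ℓ, ?_⟩
      simp only [descLeaves, Finset.mem_filter] at hl ⊢
      exact ⟨hl.1, T.ancestor_trans (T.ancestor_of_child hcmem) hl.2⟩

lemma descLeaves_subset_of_ancestor {u v : V} (h : T.IsAncestor v u) :
    T.descLeaves u ⊆ T.descLeaves v := by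
  intro x hx
  simp only [descLeaves, Finset.mem_filter] at hx ⊢
  exact ⟨hx.1, T.ancestor_trans h hx.2⟩

end ParentTree

/-- Suppose every internal vertex of `T` has at least two children
and `T` has `n` leaves.  Let `P` be an `r`-path, and let `z ∉ P` with
`parent z ∈ P` be the root of a component `T₁` of `T ∖ P` having `n₁ > n/2`
leaves.  Let `Q` be the unique path of `T` from `r` to `z` (its vertex set is
the set of ancestors of `z`).  Then every component of `T ∖ Q` has strictly
fewer than `n₁` leaves. -/
theorem stmt12 {V : Type*} [Fintype V] [DecidableEq V] (T : ParentTree V)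
    (hbranch : ∀ v : V, T.children v ≠ ∅ → 2 ≤ (T.children v).card)
    (P : List V) (hP : T.IsRPath P)
    (z : V) (hzP : z ∉ P) (hzpar : T.parent z ∈ P)
    (n₁ : ℕ) (hn₁ : n₁ = (T.descLeaves z).card)
    (hbig : T.leaves.card < 2 * n₁) :
    ∀ u : V, ¬ T.IsAncestor u z → T.IsAncestor (T.parent u) z →
      (T.descLeaves u).card < n₁ := by
  intro u hu hpu
  -- z is not the root (root lies on P, z does not)
  have hzroot : z ≠ T.root := by
    intro h
    apply hzP
    obtain ⟨hne, hhead, _⟩ := hP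
    cases P with
    | nil => exact absurd rfl hne
    | cons a l =>
      simp only [List.head?_cons, Option.some.injEq] at hhead
      rw [h, ← hhead]; exact List.mem_cons_self
  by_cases hzu : T.IsAncestor z u
  · -- z is an ancestor of u; show z = parent u, then strict subset argument
    obtain ⟨k, hk⟩ := hzu
    have hk1 : 1 ≤ k := by
      rcases k with _ | k
      · exact absurd (hk ▸ ⟨0, rfl⟩) hu
      · omega
    obtain ⟨m, hm⟩ := hpu
    have h1 : T.parent^[k - 1] (T.parent u) = z := by
      have : T.parent^[(k - 1) + 1] u = z := by rwa [Nat.sub_add_cancel hk1]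
      rwa [Function.iterate_succ_apply] at this
    have hfix : T.parent^[(k - 1) + m] z = z := by
      rw [Function.iterate_add_apply, hm, h1]
    have hkm : (k - 1) + m = 0 := by
      by_contra h
      exact hzroot (T.eq_root_of_iterate_fixed (by omega) hfix)
    have hzpu : T.parent u = z := by
      have hm0 : m = 0 := by omega
      rw [← hm, hm0]; rfl
    have huroot : u ≠ T.root := by
      intro h
      apply hzroot
      rw [← hzpu, h, T.parent_root]
    have humem : u ∈ T.children z := (T.mem_children).2 ⟨huroot, hzpu⟩
    have hcard : 2 ≤ (T.children z).card :=
      hbranch z (fun h => by simp [h] at humem)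
    obtain ⟨w, hwmem, hwu⟩ := Finset.exists_mem_ne (s := T.children z) (by omega) u
    obtain ⟨ℓ, hl⟩ := T.descLeaves_nonempty w
    have hlz : ℓ ∈ T.descLeaves z :=
      T.descLeaves_subset_of_ancestor (T.ancestor_of_child hwmem) hl
    have hlu : ℓ ∉ T.descLeaves u := by
      intro hlu
      simp only [ParentTree.descLeaves, Finset.mem_filter] at hlu hl
      rcases T.ancestor_comparable hlu.2 hl.2 with h | h
      · -- u ancestor of w
        obtain ⟨a, ha⟩ := h
        have ha1 : 1 ≤ a := by
          rcases a with _ | a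
          · simp only [Function.iterate_zero, id_eq] at ha; exact absurd ha hwu
          · omega
        apply hu
        refine ⟨a - 1, ?_⟩
        have hpw : T.parent w = z := ((T.mem_children).1 hwmem).2
        have : T.parent^[(a - 1) + 1] w = u := by rwa [Nat.sub_add_cancel ha1]
        rwa [Function.iterate_succ_apply, hpw] at this
      · -- w ancestor of u
        obtain ⟨b, hb⟩ := h
        have hb1 : 1 ≤ b := by
          rcases b with _ | b
          · simp only [Function.iterate_zero, id_eq] at hb; exact absurd hb.symm hwu
          · omega
        have hwz : T.parent^[b - 1] z = w := by
          have : T.parent^[(b - 1) + 1] u = w := by rwa [Nat.sub_add_cancel hb1]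
          rwa [Function.iterate_succ_apply, hzpu] at this
        have hpw : T.parent w = z := ((T.mem_children).1 hwmem).2
        apply hzroot
        apply T.eq_root_of_iterate_fixed (k := (b - 1) + 1) (by omega)
        rw [Function.iterate_succ_apply', hwz, hpw]
    have hss : T.descLeaves u ⊂ T.descLeaves z := by
      refine ⟨T.descLeaves_subset_of_ancestor ⟨1, hzpu⟩, fun hs => hlu (hs hlz)⟩
    rw [hn₁]
    exact Finset.card_lt_card hss
  · -- incomparable: disjoint leaf sets
    have hdisj : Disjoint (T.descLeaves u) (T.descLeaves z) := by
      rw [Finset.disjoint_left]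
      intro x hxu hxz
      simp only [ParentTree.descLeaves, Finset.mem_filter] at hxu hxz
      rcases T.ancestor_comparable hxu.2 hxz.2 with h | h
      · exact hu h
      · exact hzu h
    have hsub : T.descLeaves u ∪ T.descLeaves z ⊆ T.leaves := by
      intro x hx
      rcases Finset.mem_union.1 hx with h | h <;>
        exact (Finset.mem_filter.1 h).1
    have := Finset.card_le_card hsub
    rw [Finset.card_union_of_disjoint hdisj] at this
    omega
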